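/- Let T ∈ (0,∞], set τ = min{1, T/2}, and let a > 0, μ > 0, m > 0. Suppose y : [0,T) → ℝ is continuously differentiable with 0 ≤ y(t) ≤ m for all t ∈ [0,T), and z : [0,T) → ℝ is a nonnegative continuous function such that y′(t) = a·y(t) − μ·z(t) for all t ∈ (0,T). Then ∫_t^{t+τ} z(s) ds ≤ m·(a·τ + 1)/μ for all t ∈ (0, T−τ). -/
import Mathlib


open scoped ENNReal
open Real Set MeasureTheory intervalIntegral

/-- Let `T ∈ (0,∞]`, `τ = min {1, T/2}`, `a > 0`, `μ > 0`, `m > 0`.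
If `y : [0,T) → ℝ` is continuously differentiable with `0 ≤ y(t) ≤ m`,
`z : [0,T) → ℝ` is nonnegative continuous, and `y′(t) = a·y(t) − μ·z(t)` on `(0,T)`,
then `∫_t^{t+τ} z(s) ds ≤ m·(a·τ + 1)/μ` for all `t ∈ (0, T−τ)`. -/
theorem stmt_3 (T : ℝ≥0∞) (hT : 0 < T)
    (τ : ℝ) (hτ : τ = if T = ⊤ then 1 else min 1 (T.toReal / 2))
    (a μ m : ℝ) (ha : 0 < a) (hμ : 0 < μ) (hm : 0 < m)
    (y y' z : ℝ → ℝ)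
    -- 0 ≤ y ≤ m on [0,T)
    (hy_nonneg : ∀ t : ℝ, 0 ≤ t → ENNReal.ofReal t < T → 0 ≤ y t)
    (hy_le : ∀ t : ℝ, 0 ≤ t → ENNReal.ofReal t < T → y t ≤ m)
    -- y is continuously differentiable on [0,T) with derivative y'
    (hy_deriv : ∀ t : ℝ, 0 ≤ t → ENNReal.ofReal t < T →
      HasDerivWithinAt y (y' t) {s : ℝ | 0 ≤ s ∧ ENNReal.ofReal s < T} t)
    (hy'_cont : ContinuousOn y' {s : ℝ | 0 ≤ s ∧ ENNReal.ofReal s < T})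
    -- z is nonnegative and continuous on [0,T)
    (hz_nonneg : ∀ t : ℝ, 0 ≤ t → ENNReal.ofReal t < T → 0 ≤ z t)
    (hz_cont : ContinuousOn z {s : ℝ | 0 ≤ s ∧ ENNReal.ofReal s < T})
    -- the differential identity on (0,T)
    (heq : ∀ t : ℝ, 0 < t → ENNReal.ofReal t < T → y' t = a * y t - μ * z t) :
    ∀ t : ℝ, 0 < t → ENNReal.ofReal (t + τ) < T →
      (∫ s in t..t + τ, z s) ≤ m * (a * τ + 1) / μ := by
  set S : Set ℝ := {s : ℝ | 0 ≤ s ∧ ENNReal.ofReal s < T} with hS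
  have hτpos : 0 < τ := by
    rw [hτ]
    split_ifs with h
    · norm_num
    · have : 0 < T.toReal := ENNReal.toReal_pos hT.ne' h
      positivity
  intro t ht htT
  have hle : t ≤ t + τ := by linarith
  -- facts about points in [t, t+τ]
  have hmemS : ∀ s ∈ Icc t (t + τ), 0 < s ∧ ENNReal.ofReal s < T := by
    intro s hs
    refine ⟨lt_of_lt_of_le ht hs.1, lt_of_le_of_lt ?_ htT⟩
    exact ENNReal.ofReal_le_ofReal hs.2
  have hIccS : Icc t (t + τ) ⊆ S := fun s hs => ⟨(hmemS s hs).1.le, (hmemS s hs).2⟩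
  have hnhds : ∀ s ∈ Icc t (t + τ), S ∈ nhds s := by
    intro s hs
    obtain ⟨hs0, hsT⟩ := hmemS s hs
    by_cases hTtop : T = ⊤
    · refine Filter.mem_of_superset (isOpen_Ioi.mem_nhds hs0) ?_
      intro x hx
      exact ⟨le_of_lt hx, by simp [hTtop]⟩
    · refine Filter.mem_of_superset (isOpen_Ioo.mem_nhds
        ⟨hs0, (ENNReal.ofReal_lt_iff_lt_toReal hs0.le hTtop).mp hsT⟩) ?_
      intro x hx
      exact ⟨hx.1.le, (ENNReal.ofReal_lt_iff_lt_toReal hx.1.le hTtop).mpr hx.2⟩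
  have hderiv : ∀ s ∈ Icc t (t + τ), HasDerivAt y (y' s) s := by
    intro s hs
    obtain ⟨hs0, hsT⟩ := hmemS s hs
    exact (hy_deriv s hs0.le hsT).hasDerivAt (hnhds s hs)
  have huIcc : uIcc t (t + τ) = Icc t (t + τ) := uIcc_of_le hle
  -- interval integrability
  have hy'int : IntervalIntegrable y' volume t (t + τ) :=
    (hy'_cont.mono hIccS).intervalIntegrable_of_Icc hle
  have hzint : IntervalIntegrable z volume t (t + τ) :=
    (hz_cont.mono hIccS).intervalIntegrable_of_Icc hle
  have hycont : ContinuousOn y (Icc t (t + τ)) := fun s hs =>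
    ((hderiv s hs).continuousAt).continuousWithinAt
  have hyint : IntervalIntegrable y volume t (t + τ) :=
    hycont.intervalIntegrable_of_Icc hle
  -- FTC
  have hftc : ∫ s in t..t + τ, y' s = y (t + τ) - y t := by
    refine intervalIntegral.integral_eq_sub_of_hasDerivAt ?_ hy'int
    intro s hs
    exact hderiv s (huIcc ▸ hs)
  -- rewrite the integrand
  have heq' : ∫ s in t..t + τ, y' s = ∫ s in t..t + τ, (a * y s - μ * z s) := by
    refine intervalIntegral.integral_congr ?_
    intro s hs
    rw [huIcc] at hs
    obtain ⟨hs0, hsT⟩ := hmemS s hs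
    exact heq s hs0 hsT
  have hsplit : ∫ s in t..t + τ, (a * y s - μ * z s)
      = a * (∫ s in t..t + τ, y s) - μ * ∫ s in t..t + τ, z s := by
    rw [intervalIntegral.integral_sub (hyint.const_mul a) (hzint.const_mul μ),
      intervalIntegral.integral_const_mul, intervalIntegral.integral_const_mul]
  -- bound ∫ y ≤ m * τ
  have hybound : ∫ s in t..t + τ, y s ≤ m * τ := by
    have : ∫ s in t..t + τ, y s ≤ ∫ _ in t..t + τ, m := by
      refine intervalIntegral.integral_mono_on hle hyint (intervalIntegrable_const) ?_
      intro s hs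
      obtain ⟨hs0, hsT⟩ := hmemS s hs
      exact hy_le s hs0.le hsT
    simpa [mul_comm] using this
  -- endpoint bounds
  have htT' : ENNReal.ofReal t < T :=
    (hmemS t ⟨le_refl t, hle⟩).2
  have hyt : y t ≤ m := hy_le t ht.le htT'
  have hytτ : 0 ≤ y (t + τ) := hy_nonneg (t + τ) (by linarith) htT
  -- combine
  have key : μ * ∫ s in t..t + τ, z s ≤ a * (m * τ) + m := by
    have h1 : μ * ∫ s in t..t + τ, z s
        = a * (∫ s in t..t + τ, y s) - (y (t + τ) - y t) := by
      have h := hftc.symm.trans (heq'.trans hsplit)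
      linarith [h]
    have h2 : a * (∫ s in t..t + τ, y s) ≤ a * (m * τ) :=
      mul_le_mul_of_nonneg_left hybound ha.le
    linarith
  rw [le_div_iff₀ hμ]
  calc (∫ s in t..t + τ, z s) * μ = μ * ∫ s in t..t + τ, z s := mul_comm _ _
    _ ≤ a * (m * τ) + m := key
    _ = m * (a * τ + 1) := by ring
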